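/- Let x and y be p-strings with ⟨x[2..]⟩ < ⟨y[2..]⟩ lexicographically, and suppose at least one of fce(x), fce(y) is a static symbol. If fce(x) ≠ fce(y), then lcp(⟨x⟩,⟨y⟩) = 0 and ⟨x⟩ < ⟨y⟩ iff fce(x) < fce(y); if fce(x) = fce(y), then lcp(⟨x⟩,⟨y⟩) = lcp(⟨x[2..]⟩,⟨y[2..]⟩)+1, lcp∞(⟨x⟩,⟨y⟩) = lcp∞(⟨x[2..]⟩,⟨y[2..]⟩), and ⟨x⟩ < ⟨y⟩. -/

import Mathlib

/-!
Prepending a static symbol does not change any distance between equal p-symbols, so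
`⟨s a :: t⟩ = s a :: ⟨t⟩`, whereas `⟨p a :: t⟩` starts with `∞`. When at least one of `x`, `y`
starts with a static symbol, the first letters of `⟨x⟩` and `⟨y⟩` therefore compare exactly as
`fce x` and `fce y` do (static symbols lie below all naturals and `∞`): either the encodings
already differ in their first letter, or both start with the same static symbol and lcp, lcp∞
and the order are inherited from the tails.
-/

/-- Symbols of a parameterized string: static symbols `s a` (from Σs) and
parameter symbols `p a` (from Σp). -/
inductive PSym where
  | s : ℕ → PSym
  | p : ℕ → PSym
deriving DecidableEq

/-- Symbols of a p-encoded string: static symbols, finite distances, and ∞. -/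
inductive Enc where
  | s : ℕ → Enc
  | fin : ℕ → Enc
  | inf : Enc
deriving DecidableEq

/-- Order embedding: static symbols < natural numbers < ∞. -/
def Enc.toPair : Enc → ℕ ×ₗ ℕ
  | .s a => toLex (0, a)
  | .fin d => toLex (1, d)
  | .inf => toLex (2, 0)

instance : LinearOrder Enc :=
  LinearOrder.lift' Enc.toPair (by
    rintro (a | a | _) (b | b | _) h <;>
      simp_all [Enc.toPair, toLex_inj, Prod.ext_iff])

/-- Largest position `j < i` (0-based) carrying the same symbol as position `i`. -/
def prevOcc (w : List PSym) (i : ℕ) : Option ℕ :=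
  ((List.range i).filter (fun j => w[j]? = w[i]?)).max?

/-- The p-encoding of position `i` (0-based) of `w`. -/
def pencSym (w : List PSym) (i : ℕ) : Enc :=
  match w[i]? with
  | some (PSym.s a) => Enc.s a
  | some (PSym.p _) =>
    match prevOcc w i with
    | some j => Enc.fin (i - j)
    | none => Enc.inf
  | none => Enc.inf

/-- The p-encoding ⟨w⟩ of a p-string `w`. -/
def penc (w : List PSym) : List Enc :=
  (List.range w.length).map (pencSym w)

/-- Lexicographic (strict) order on p-encoded strings. -/
def lexLt (x y : List Enc) : Prop := List.Lex (· < ·) x y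

def lexLe (x y : List Enc) : Prop := lexLt x y ∨ x = y

/-- Length of the longest common prefix. -/
def lcp {α : Type*} [DecidableEq α] : List α → List α → ℕ
  | a :: x, b :: y => if a = b then lcp x y + 1 else 0
  | _, _ => 0

/-- Number of ∞'s in the longest common prefix of two p-encoded strings. -/
def lcpInf (x y : List Enc) : ℕ := (x.take (lcp x y)).count Enc.inf

/-- Number of distinct p-symbols occurring in `w` (denoted |w|_p). -/
def distinctP (w : List PSym) : ℕ :=
  (w.filterMap (fun s => match s with | PSym.p a => some a | PSym.s _ => none)).dedup.length

/-- For `w` starting with a p-symbol: the rank of `w[1]` among the distinct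
p-symbols of `w[1..h+1]`, where `h+1 = min{|w|, second occurrence of w[1] in w}`. -/
def fceRank (w : List PSym) : ℕ :=
  match w with
  | [] => 0
  | c :: rest => distinctP ((c :: rest).take (min (c :: rest).length (2 + rest.idxOf c)))

/-- The function fce from the paper; `fce ε = $` is modelled as `Enc.s 0`. -/
def fce (w : List PSym) : Enc :=
  match w with
  | [] => Enc.s 0
  | PSym.s a :: _ => Enc.s a
  | w => Enc.fin (fceRank w)

theorem List.max?_map_of_monotone {α β : Type*} [LinearOrder α] [LinearOrder β] {f : α → β}
    (hf : Monotone f) (l : List α) : (l.map f).max? = l.max?.map f := by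
  induction l with
  | nil => rfl
  | cons a l ih =>
    simp only [List.map_cons, List.max?_cons, ih]
    cases l.max? <;> simp [hf.map_max]

namespace Enc

theorem s_lt_fin (a r : ℕ) : Enc.s a < Enc.fin r := by
  show toPair _ < toPair _
  simp [toPair, Prod.Lex.toLex_lt_toLex]

theorem s_lt_inf (a : ℕ) : Enc.s a < Enc.inf := by
  show toPair _ < toPair _
  simp [toPair, Prod.Lex.toLex_lt_toLex]

end Enc

theorem prevOcc_cons_succ {c : PSym} {t : List PSym} {i : ℕ} (h : t[i]? ≠ some c) :
    prevOcc (c :: t) (i + 1) = (prevOcc t i).map Nat.succ := by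
  unfold prevOcc
  rw [List.range_succ_eq_map, List.filter_cons]
  simp only [List.getElem?_cons_zero, List.getElem?_cons_succ, Ne.symm h, decide_false,
    Bool.false_eq_true, if_false, List.filter_map]
  exact List.max?_map_of_monotone (fun _ _ => Nat.succ_le_succ) _

theorem pencSym_cons_s_succ (a : ℕ) (t : List PSym) (i : ℕ) :
    pencSym (PSym.s a :: t) (i + 1) = pencSym t i := by
  unfold pencSym
  rw [List.getElem?_cons_succ]
  match ht : t[i]? with
  | none => rfl
  | some (PSym.s c) => rfl
  | some (PSym.p c) =>
    rw [prevOcc_cons_succ (by simp [ht])]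
    cases prevOcc t i <;> simp

theorem penc_cons_s (a : ℕ) (t : List PSym) : penc (PSym.s a :: t) = Enc.s a :: penc t := by
  simp only [penc, List.length_cons, List.range_succ_eq_map, List.map_cons, List.map_map]
  exact congrArg₂ _ rfl (List.map_congr_left fun i _ => pencSym_cons_s_succ a t i)

theorem penc_cons_p (a : ℕ) (t : List PSym) : ∃ r, penc (PSym.p a :: t) = Enc.inf :: r :=
  ⟨_, by rw [penc, List.length_cons, List.range_succ_eq_map, List.map_cons]; rfl⟩

theorem fce_cons_s (a : ℕ) (t : List PSym) : fce (PSym.s a :: t) = Enc.s a := rfl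

theorem fce_cons_p (a : ℕ) (t : List PSym) :
    fce (PSym.p a :: t) = Enc.fin (fceRank (PSym.p a :: t)) := rfl

theorem lcp_cons_self {α : Type*} [DecidableEq α] (a : α) (l m : List α) :
    lcp (a :: l) (a :: m) = lcp l m + 1 := by
  simp [lcp]

theorem lcp_cons_of_ne {α : Type*} [DecidableEq α] {a b : α} (l m : List α) (h : a ≠ b) :
    lcp (a :: l) (b :: m) = 0 := by
  simp [lcp, h]

theorem lcpInf_cons_s (a : ℕ) (l m : List Enc) :
    lcpInf (Enc.s a :: l) (Enc.s a :: m) = lcpInf l m := by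
  simp [lcpInf, lcp_cons_self]

theorem lexLt_cons_of_ne {a b : Enc} (l m : List Enc) (h : a ≠ b) :
    lexLt (a :: l) (b :: m) ↔ a < b := by
  simp [lexLt, List.cons_lex_cons_iff, h]

theorem stmt5_general (x y : List PSym) (hx : x ≠ [])
    (hlt : lexLt (penc x.tail) (penc y.tail))
    (hs : (∃ a, fce x = Enc.s a) ∨ (∃ a, fce y = Enc.s a)) :
    (fce x ≠ fce y →
      lcp (penc x) (penc y) = 0 ∧ (lexLt (penc x) (penc y) ↔ fce x < fce y)) ∧
    (fce x = fce y →
      lcp (penc x) (penc y) = lcp (penc x.tail) (penc y.tail) + 1 ∧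
      lcpInf (penc x) (penc y) = lcpInf (penc x.tail) (penc y.tail) ∧
      lexLt (penc x) (penc y)) := by
  have hy : y ≠ [] := by rintro rfl; exact List.not_lex_nil hlt
  obtain ⟨c, xt, rfl⟩ := List.exists_cons_of_ne_nil hx
  obtain ⟨d, yt, rfl⟩ := List.exists_cons_of_ne_nil hy
  rw [List.tail_cons, List.tail_cons] at hlt ⊢
  cases c with
  | s a =>
    cases d with
    | s b =>
      rw [fce_cons_s, fce_cons_s, penc_cons_s, penc_cons_s]
      refine ⟨fun hne => ⟨lcp_cons_of_ne _ _ hne, lexLt_cons_of_ne _ _ hne⟩, ?_⟩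
      rintro ⟨⟩
      exact ⟨lcp_cons_self .., lcpInf_cons_s .., List.Lex.cons hlt⟩
    | p b =>
      obtain ⟨r, hr⟩ := penc_cons_p b yt
      have hne : Enc.s a ≠ Enc.inf := nofun
      rw [fce_cons_s, fce_cons_p, penc_cons_s, hr]
      refine ⟨fun _ => ⟨lcp_cons_of_ne _ _ hne, ?_⟩, nofun⟩
      rw [lexLt_cons_of_ne _ _ hne]
      exact iff_of_true (Enc.s_lt_inf a) (Enc.s_lt_fin a _)
  | p a =>
    cases d with
    | s b =>
      obtain ⟨r, hr⟩ := penc_cons_p a xt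
      have hne : Enc.inf ≠ Enc.s b := nofun
      rw [fce_cons_p, fce_cons_s, hr, penc_cons_s]
      refine ⟨fun _ => ⟨lcp_cons_of_ne _ _ hne, ?_⟩, nofun⟩
      rw [lexLt_cons_of_ne _ _ hne]
      exact iff_of_false (Enc.s_lt_inf b).not_gt (Enc.s_lt_fin b _).not_gt
    | p b => simp [fce_cons_p] at hs

/-- Cases (A1) and (A2) of Lemma 3: ⟨x[2..]⟩ < ⟨y[2..]⟩ and at least one of
fce(x), fce(y) is a static symbol. -/
theorem stmt5 (x y : List PSym) (hx : x ≠ []) (hy : y ≠ [])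
    (hlt : lexLt (penc x.tail) (penc y.tail))
    (hs : (∃ a, fce x = Enc.s a) ∨ (∃ a, fce y = Enc.s a)) :
    (fce x ≠ fce y →
      lcp (penc x) (penc y) = 0 ∧ (lexLt (penc x) (penc y) ↔ fce x < fce y)) ∧
    (fce x = fce y →
      lcp (penc x) (penc y) = lcp (penc x.tail) (penc y.tail) + 1 ∧
      lcpInf (penc x) (penc y) = lcpInf (penc x.tail) (penc y.tail) ∧
      lexLt (penc x) (penc y)) :=
  stmt5_general x y hx hlt hs
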